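/- arXiv:math/0406553 — 8 statements merged into one kernel-verified Lean document; each statement's English description precedes it below -/
import Mathlib

section
/- Let A be a unital (complex) algebra with identity 1, B a (complex) algebra, n ≥ 2, and φ : A → B an n-homomorphism. Define ψ : A → B by ψ(a) = (φ(1))^{n-2}·φ(a). Then ψ is an algebra homomorphism (ψ is linear and ψ(ab) = ψ(a)ψ(b) for all a, b ∈ A) and φ(a) = φ(1)·ψ(a) for every a ∈ A. -/
/-- `φ` is an `n`-homomorphism: `φ (a₁ ⋯ aₙ) = φ a₁ ⋯ φ aₙ` for all `a₁, …, aₙ`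
(encoded via a head element together with a list, so that it makes sense for
non-unital algebras). -/
def IsNHom {A B : Type*} [NonUnitalNonAssocSemiring A] [NonUnitalNonAssocSemiring B]
    [Module ℂ A] [Module ℂ B] (n : ℕ) (φ : A →ₗ[ℂ] B) : Prop :=
  ∀ (a : A) (l : List A), l.length + 1 = n →
    φ (l.foldl (· * ·) a) = (l.map φ).foldl (· * ·) (φ a)

/-- `powMul b k c = b^k * c`, defined so as to make sense in a non-unital algebra. -/
def powMul {B : Type*} [Mul B] (b : B) : ℕ → B → B
  | 0, c => c
  | k + 1, c => b * powMul b k c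

lemma powMul_add {B : Type*} [NonUnitalRing B] (b x y : B) :
    ∀ k, powMul b k (x + y) = powMul b k x + powMul b k y
  | 0 => rfl
  | k + 1 => by rw [powMul, powMul_add b x y k, mul_add, powMul, powMul]

lemma powMul_mul {B : Type*} [NonUnitalRing B] (b x y : B) :
    ∀ k, powMul b k (x * y) = powMul b k x * y
  | 0 => rfl
  | k + 1 => by rw [powMul, powMul_mul b x y k, powMul, mul_assoc]

lemma powMul_smul {B : Type*} [NonUnitalRing B] [Module ℂ B] [SMulCommClass ℂ B B]
    (b : B) (c : ℂ) (x : B) :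
    ∀ k, powMul b k (c • x) = c • powMul b k x
  | 0 => rfl
  | k + 1 => by rw [powMul, powMul_smul b c x k, mul_smul_comm, powMul]

lemma foldl_replicate_mul {B : Type*} [NonUnitalRing B] (b : B) :
    ∀ (k : ℕ) (x y : B), ((List.replicate k b).foldl (· * ·) x) * y = x * powMul b k y
  | 0, x, y => rfl
  | k + 1, x, y => by
      rw [List.replicate_succ, List.foldl_cons]
      show ((List.replicate k b).foldl (· * ·) (x * b)) * y = _
      rw [foldl_replicate_mul b k (x * b) y, powMul, mul_assoc]

lemma foldl_replicate_one {A : Type*} [Monoid A] :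
    ∀ (k : ℕ) (x : A), (List.replicate k (1 : A)).foldl (· * ·) x = x
  | 0, x => rfl
  | k + 1, x => by
      rw [List.replicate_succ, List.foldl_cons]
      show (List.replicate k (1 : A)).foldl (· * ·) (x * 1) = x
      rw [mul_one, foldl_replicate_one k x]

/-- If `A` is unital and `φ : A → B` is an `n`-homomorphism, then `ψ(a) = (φ 1)^(n-2) * φ a`
is an algebra homomorphism (a multiplicative linear map) and `φ a = φ 1 * ψ a` for all `a`. -/
theorem stmt3 {A B : Type*} [Ring A] [Algebra ℂ A]
    [NonUnitalRing B] [Module ℂ B] [SMulCommClass ℂ B B] [IsScalarTower ℂ B B]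
    (n : ℕ) (hn : 2 ≤ n) (φ : A →ₗ[ℂ] B) (hφ : IsNHom n φ)
    (ψ : A → B) (hψ : ∀ a : A, ψ a = powMul (φ 1) (n - 2) (φ a)) :
    (∀ a b : A, ψ (a + b) = ψ a + ψ b) ∧
    (∀ (c : ℂ) (a : A), ψ (c • a) = c • ψ a) ∧
    (∀ a b : A, ψ (a * b) = ψ a * ψ b) ∧
    (∀ a : A, φ a = φ 1 * ψ a) := by
  -- key identity: φ (a * b) = φ a * powMul (φ 1) (n-2) (φ b)
  have key : ∀ a b : A, φ (a * b) = φ a * powMul (φ 1) (n - 2) (φ b) := by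
    intro a b
    have hlen : (List.replicate (n - 2) (1 : A) ++ [b]).length + 1 = n := by
      simp; omega
    have h := hφ a (List.replicate (n - 2) (1 : A) ++ [b]) hlen
    simp only [List.foldl_append, List.foldl_cons, List.foldl_nil, foldl_replicate_one,
      List.map_append, List.map_replicate, List.map_cons, List.map_nil] at h
    rw [h, foldl_replicate_mul]
  refine ⟨?_, ?_, ?_, ?_⟩
  · intro a b
    rw [hψ, hψ, hψ, map_add, powMul_add]
  · intro c a
    rw [hψ, hψ, map_smul, powMul_smul]
  · intro a b
    rw [hψ (a * b), key, hψ a, hψ b, powMul_mul]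
  · intro a
    have := key 1 a
    rw [one_mul] at this
    rw [this, hψ]
end

section
/- Let A and B be (complex) algebras with A factorizable, let n ≥ 2, and let φ : A → B be an n-homomorphism. Then the kernel of φ is a two-sided ideal of A: if φ(a) = 0 and u ∈ A, then φ(au) = 0 and φ(ua) = 0. -/
private lemma foldl_mul_assoc' {A : Type*} [NonUnitalRing A] :
    ∀ (l : List A) (x y : A), l.foldl (· * ·) (x * y) = x * l.foldl (· * ·) y := by
  intro l
  induction l with
  | nil => intro x y; rfl
  | cons h t ih =>
    intro x y
    simp only [List.foldl_cons, mul_assoc]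
    exact ih x (y * h)

private lemma foldl_mul_zero {B : Type*} [NonUnitalRing B] :
    ∀ (l : List B), l.foldl (· * ·) 0 = 0 := by
  intro l
  induction l with
  | nil => rfl
  | cons h t ih => simpa using ih

private lemma factor_list {A : Type*} [NonUnitalRing A]
    (hfact : ∀ a : A, ∃ b c : A, a = b * c) :
    ∀ (k : ℕ) (u : A), ∃ (h : A) (l : List A), l.length = k ∧ l.foldl (· * ·) h = u := by
  intro k
  induction k with
  | zero => intro u; exact ⟨u, [], rfl, rfl⟩
  | succ k ih =>
    intro u
    obtain ⟨b, c, hu⟩ := hfact u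
    obtain ⟨h, l, hlen, hprod⟩ := ih b
    refine ⟨h, l ++ [c], by simp [hlen], ?_⟩
    simp [List.foldl_append, hprod, hu]

/-- If `A` is factorizable and `φ : A → B` is an `n`-homomorphism, then `ker φ` is a
two-sided ideal of `A`. -/
theorem stmt4 {A B : Type*}
    [NonUnitalRing A] [Module ℂ A] [SMulCommClass ℂ A A] [IsScalarTower ℂ A A]
    [NonUnitalRing B] [Module ℂ B] [SMulCommClass ℂ B B] [IsScalarTower ℂ B B]
    (hfact : ∀ a : A, ∃ b c : A, a = b * c)
    (n : ℕ) (hn : 2 ≤ n) (φ : A →ₗ[ℂ] B) (hφ : IsNHom n φ) :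
    ∀ a u : A, φ a = 0 → φ (a * u) = 0 ∧ φ (u * a) = 0 := by
  intro a u ha
  obtain ⟨k, rfl⟩ := Nat.exists_eq_add_of_le hn
  obtain ⟨h, l, hlen, hprod⟩ := factor_list hfact k u
  constructor
  · -- a * u = foldl over (h :: l) starting at a
    have hlen' : (h :: l).length + 1 = 2 + k := by simp [hlen]; omega
    have := hφ a (h :: l) hlen'
    have hfold : (h :: l).foldl (· * ·) a = a * u := by
      simp only [List.foldl_cons]
      rw [foldl_mul_assoc', hprod]
    rw [hfold] at this
    rw [this]
    simp only [List.map_cons, List.foldl_cons, ha, zero_mul]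
    exact foldl_mul_zero _
  · -- u * a = foldl over (l ++ [a]) starting at h
    have hlen' : (l ++ [a]).length + 1 = 2 + k := by simp [hlen]; omega
    have := hφ h (l ++ [a]) hlen'
    have hfold : (l ++ [a]).foldl (· * ·) h = u * a := by
      rw [List.foldl_append, hprod]
      rfl
    rw [hfold] at this
    rw [this]
    simp [List.foldl_append, ha]
end

section
/- Let A be a unital (complex) algebra with identity 1_A, B a unital (complex) algebra, and φ : A → B an associative linear map such that φ(1_A) is invertible in B. Then the map ψ : A → B defined by ψ(a) = (φ(1_A))⁻¹·φ(a) is an algebra homomorphism: ψ(ab) = ψ(a)ψ(b) for all a, b ∈ A. -/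
/-- If `A` and `B` are unital, `φ : A → B` is an associative linear map and `φ 1` is
invertible in `B`, then `ψ(a) = (φ 1)⁻¹ * φ a` is multiplicative. -/
theorem stmt12 {A B : Type*} [Ring A] [Algebra ℂ A] [Ring B] [Algebra ℂ B]
    (φ : A →ₗ[ℂ] B) (hassoc : ∀ a b c : A, φ a * φ (b * c) = φ (a * b) * φ c)
    (hinv : IsUnit (φ 1)) :
    ∀ a b : A,
      Ring.inverse (φ 1) * φ (a * b) =
        (Ring.inverse (φ 1) * φ a) * (Ring.inverse (φ 1) * φ b) := by
  intro a b
  have h1 : φ 1 * φ (a * b) = φ a * φ b := by simpa using hassoc 1 a b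
  have hc : Commute (φ 1) (φ a) := by simpa [Commute, SemiconjBy] using hassoc 1 a 1
  have h3 : φ a * Ring.inverse (φ 1) = Ring.inverse (φ 1) * φ a := by
    obtain ⟨u, hu⟩ := hinv
    rw [← hu, Ring.inverse_unit]
    have hc' : Commute (φ a) (↑u : B) := by rw [hu]; exact hc.symm
    exact hc'.units_inv_right.eq
  calc Ring.inverse (φ 1) * φ (a * b)
      = Ring.inverse (φ 1) * ((Ring.inverse (φ 1) * φ 1) * φ (a * b)) := by
        rw [Ring.inverse_mul_cancel _ hinv, one_mul]
    _ = Ring.inverse (φ 1) * (Ring.inverse (φ 1) * (φ a * φ b)) := by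
        rw [mul_assoc, h1]
    _ = Ring.inverse (φ 1) * ((Ring.inverse (φ 1) * φ a) * φ b) := by
        rw [mul_assoc]
    _ = Ring.inverse (φ 1) * ((φ a * Ring.inverse (φ 1)) * φ b) := by rw [h3]
    _ = (Ring.inverse (φ 1) * φ a) * (Ring.inverse (φ 1) * φ b) := by
        noncomm_ring
end

section
/- Let H and K be infinite dimensional complex Hilbert spaces, let n ≥ 2, and let φ : B(H) → B(K) be a bijective n-homomorphism (a bijective linear map with φ(T₁⋯Tₙ) = φ(T₁)⋯φ(Tₙ) for all T₁,…,Tₙ ∈ B(H)). Then there exist a complex number α and an invertible bounded linear operator S from K onto H such that φ(T) = α·S⁻¹TS for all T ∈ B(H). -/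
theorem List.foldl_mul_replicate {M : Type*} [Monoid M] (a c : M) (m : ℕ) :
    (List.replicate m c).foldl (· * ·) a = a * c ^ m := by
  induction m generalizing a with
  | zero => simp
  | succ m ih => rw [List.replicate_succ, List.foldl_cons, ih, mul_assoc, pow_succ']

namespace IsNHom

variable {A B : Type*} [Semiring A] [Module ℂ A] [Semiring B] [Algebra ℂ B]
  {m : ℕ} {φ : A →ₗ[ℂ] B}

theorem map_mul (hφ : IsNHom (m + 2) φ) (a b : A) : φ (a * b) = φ a * φ b * φ 1 ^ m := by
  simpa [List.foldl_mul_replicate] using hφ a (b :: List.replicate m 1) (by simp)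

theorem map_one_pow_succ (hφ : IsNHom (m + 2) φ) (hφs : Function.Surjective φ) :
    φ 1 ^ (m + 1) = 1 := by
  obtain ⟨a, ha⟩ := hφs 1
  simpa [ha, ← pow_succ'] using (hφ.map_mul a 1).symm

theorem map_one_mem_center (hφ : IsNHom (m + 2) φ) (hφs : Function.Surjective φ) :
    φ 1 ∈ Subalgebra.center ℂ B := by
  rw [Subalgebra.mem_center_iff]
  intro b
  obtain ⟨a, rfl⟩ := hφs b
  calc φ a * φ 1 = φ 1 * φ a * φ 1 ^ m * φ 1 := by rw [← hφ.map_mul, one_mul]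
    _ = φ 1 * φ a * φ 1 ^ (m + 1) := by rw [mul_assoc _ (φ 1 ^ m), ← pow_succ]
    _ = φ 1 * φ a := by rw [hφ.map_one_pow_succ hφs, mul_one]

theorem smul_map_mul {μ : ℂ} (hφ : IsNHom (m + 2) φ) (hμ : φ 1 = algebraMap ℂ B μ) (a b : A) :
    μ ^ m • φ (a * b) = (μ ^ m • φ a) * (μ ^ m • φ b) := by
  rw [hφ.map_mul, hμ, ← map_pow, ← Algebra.commutes, ← mul_assoc, ← Algebra.smul_def,
    smul_mul_assoc, smul_smul, smul_mul_smul_comm]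

theorem exists_smul_map_mul [Algebra.IsCentral ℂ B] (hφ : IsNHom (m + 2) φ)
    (hφs : Function.Surjective φ) :
    ∃ c : ℂ, c ≠ 0 ∧ ∀ a b, c • φ (a * b) = (c • φ a) * (c • φ b) := by
  cases subsingleton_or_nontrivial B
  · exact ⟨1, one_ne_zero, fun _ _ ↦ Subsingleton.elim _ _⟩
  obtain ⟨μ, hμ⟩ : φ 1 ∈ Set.range (algebraMap ℂ B) := by
    rw [← Algebra.mem_bot, ← Algebra.IsCentral.center_eq_bot ℂ B]
    exact hφ.map_one_mem_center hφs
  have hμ0 : μ ≠ 0 := by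
    rintro rfl
    simpa [← hμ] using hφ.map_one_pow_succ hφs
  exact ⟨μ ^ m, pow_ne_zero m hμ0, hφ.smul_map_mul hμ.symm⟩

end IsNHom

theorem IsNHom.exists_eq_smul_algEquiv {A B : Type*} [Semiring A] [Algebra ℂ A] [Semiring B]
    [Algebra ℂ B] [Algebra.IsCentral ℂ B] {m : ℕ} {φ : A →ₗ[ℂ] B} (hφ : IsNHom (m + 2) φ)
    (hφb : Function.Bijective φ) : ∃ (α : ℂ) (Φ : A ≃ₐ[ℂ] B), ∀ a, φ a = α • Φ a := by
  obtain ⟨c, hc, hmul⟩ := hφ.exists_smul_map_mul hφb.surjective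
  let e : A ≃ₗ[ℂ] B :=
    .ofBijective (c • φ) ((MulAction.bijective (Units.mk0 c hc)).comp hφb)
  have he (a : A) : e a = c • φ a := rfl
  have hone : e 1 = 1 := by
    obtain ⟨a, ha⟩ := e.surjective 1
    calc e 1 = e 1 * e a := by rw [ha, mul_one]
      _ = e a := by rw [he, he, ← hmul, one_mul]
      _ = 1 := ha
  refine ⟨c⁻¹, .ofLinearEquiv e hone (by simpa only [he] using hmul), fun a ↦ ?_⟩
  rw [AlgEquiv.ofLinearEquiv_apply, he, smul_smul, inv_mul_cancel₀ hc, one_smul]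

namespace ContinuousLinearMap

variable {R V : Type*} [Field R] [TopologicalSpace R] [AddCommGroup V]
  [TopologicalSpace V] [Module R V] [ContinuousSMul R V]

theorem smulRight_mul_mul_smulRight (f : V →L[R] R) (x : V) (T : V →L[R] V) :
    f.smulRight x * T * f.smulRight x = f (T x) • f.smulRight x := by
  ext y
  simp [smul_smul, mul_comm]

theorem eq_zero_or_eq_zero_of_forall_mul_mul_eq_zero [IsTopologicalRing R] [SeparatingDual R V]
    {a b : V →L[R] V} (h : ∀ X, a * X * b = 0) : a = 0 ∨ b = 0 := by
  by_contra! ⟨ha, hb⟩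
  obtain ⟨v, hv⟩ := DFunLike.ne_iff.mp ha
  obtain ⟨u, hu⟩ := DFunLike.ne_iff.mp hb
  obtain ⟨g, hg⟩ := SeparatingDual.exists_eq_one (R := R) hu
  exact hv (by simpa [hg] using DFunLike.congr_fun (h (g.smulRight v)) u)

end ContinuousLinearMap

section AutomaticContinuity

open ContinuousLinearMap Filter Topology

variable {𝕜 V W : Type*} [NontriviallyNormedField 𝕜]
  [NormedAddCommGroup V] [NormedSpace 𝕜 V] [CompleteSpace V] [SeparatingDual 𝕜 V]
  [NormedAddCommGroup W] [NormedSpace 𝕜 W] [CompleteSpace W] [SeparatingDual 𝕜 W]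

theorem AlgEquiv.continuous_of_completeSpace (Φ : (V →L[𝕜] V) ≃ₐ[𝕜] (W →L[𝕜] W)) :
    Continuous Φ := by
  rcases subsingleton_or_nontrivial V with hV | hV
  · exact continuous_of_const fun _ _ ↦ congrArg Φ (Subsingleton.elim _ _)
  obtain ⟨x, hx⟩ := exists_ne (0 : V)
  obtain ⟨f, hf⟩ := SeparatingDual.exists_eq_one (R := 𝕜) hx
  set p := f.smulRight x
  have hq : Φ p ≠ 0 := (map_ne_zero_iff Φ Φ.injective).mpr fun hp ↦
    hx (by simpa [p, hf] using DFunLike.congr_fun hp x)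
  refine Φ.toLinearMap.continuous_of_seq_closed_graph fun u T D hu hΦu ↦ ?_
  have key (A B : V →L[𝕜] V) : Φ p * Φ A * D * Φ B * Φ p = Φ (p * (A * T * B) * p) := by
    have hsandwich (S : V →L[𝕜] V) : Φ (p * (A * S * B) * p) = f ((A * S * B) x) • Φ p := by
      rw [smulRight_mul_mul_smulRight, map_smul]
    have lim₁ : Tendsto (fun k ↦ Φ (p * (A * u k * B) * p)) atTop
        (𝓝 (Φ (p * (A * T * B) * p))) := by
      simp only [hsandwich]
      exact ((by fun_prop : Continuous fun S ↦ f ((A * S * B) x) • Φ p).tendsto T).comp hu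
    have lim₂ : Tendsto (fun k ↦ Φ (p * (A * u k * B) * p)) atTop
        (𝓝 (Φ p * Φ A * D * Φ B * Φ p)) := by
      simp only [map_mul, ← mul_assoc]
      exact ((tendsto_const_nhds.mul hΦu).mul tendsto_const_nhds).mul tendsto_const_nhds
    exact tendsto_nhds_unique lim₂ lim₁
  have hD (X Y : W →L[𝕜] W) : Φ p * X * (D - Φ T) * Y * Φ p = 0 := by
    obtain ⟨A, rfl⟩ := Φ.surjective X
    obtain ⟨B, rfl⟩ := Φ.surjective Y
    rw [mul_sub, sub_mul, sub_mul, key, sub_eq_zero]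
    simp only [map_mul, mul_assoc]
  have hDY (Y : W →L[𝕜] W) : (D - Φ T) * Y * Φ p = 0 :=
    (eq_zero_or_eq_zero_of_forall_mul_mul_eq_zero fun X ↦ by simpa only [mul_assoc] using hD X Y
      ).resolve_left hq
  exact sub_eq_zero.mp ((eq_zero_or_eq_zero_of_forall_mul_mul_eq_zero hDY).resolve_right hq)

theorem AlgEquiv.exists_continuousLinearEquiv_conj (Φ : (V →L[𝕜] V) ≃ₐ[𝕜] (W →L[𝕜] W)) :
    ∃ U : V ≃L[𝕜] W, ∀ T, Φ T = U ∘L T ∘L U.symm := by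
  obtain ⟨U, hU⟩ := ContinuousAlgEquiv.eq_continuousLinearEquivConjContinuousAlgEquiv
    ⟨Φ, Φ.continuous_of_completeSpace, Φ.symm.continuous_of_completeSpace⟩
  exact ⟨U, fun T ↦ DFunLike.congr_fun hU T⟩

end AutomaticContinuity

theorem stmt13_general {H K : Type*}
    [NormedAddCommGroup H] [InnerProductSpace ℂ H] [CompleteSpace H]
    [NormedAddCommGroup K] [InnerProductSpace ℂ K] [CompleteSpace K]
    (n : ℕ) (hn : 2 ≤ n) (φ : (H →L[ℂ] H) →ₗ[ℂ] (K →L[ℂ] K))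
    (hbij : Function.Bijective φ) (hφ : IsNHom n φ) :
    ∃ (α : ℂ) (S : K ≃L[ℂ] H),
      ∀ T : H →L[ℂ] H,
        φ T = α • ((S.symm : H →L[ℂ] K).comp (T.comp (S : K →L[ℂ] H))) := by
  obtain ⟨m, rfl⟩ := Nat.exists_eq_add_of_le' hn
  obtain ⟨α, Φ, hΦ⟩ := hφ.exists_eq_smul_algEquiv hbij
  obtain ⟨U, hU⟩ := Φ.exists_continuousLinearEquiv_conj
  exact ⟨α, U.symm, fun T ↦ by rw [hΦ, hU]; rfl⟩

/-- If `H` and `K` are infinite-dimensional complex Hilbert spaces and `φ : B(H) → B(K)` is a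
bijective `n`-homomorphism, then there are `α : ℂ` and an invertible bounded operator
`S : K → H` such that `φ T = α • S⁻¹ ∘ T ∘ S` for all `T ∈ B(H)`. -/
theorem stmt13 {H K : Type*}
    [NormedAddCommGroup H] [InnerProductSpace ℂ H] [CompleteSpace H]
    [NormedAddCommGroup K] [InnerProductSpace ℂ K] [CompleteSpace K]
    (hH : ¬ FiniteDimensional ℂ H) (hK : ¬ FiniteDimensional ℂ K)
    (n : ℕ) (hn : 2 ≤ n) (φ : (H →L[ℂ] H) →ₗ[ℂ] (K →L[ℂ] K))
    (hbij : Function.Bijective φ) (hφ : IsNHom n φ) :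
    ∃ (α : ℂ) (S : K ≃L[ℂ] H),
      ∀ T : H →L[ℂ] H,
        φ T = α • ((S.symm : H →L[ℂ] K).comp (T.comp (S : K →L[ℂ] H))) :=
  stmt13_general n hn φ hbij hφ
end

section
/- Let A be a semiprime (complex) algebra and a ∈ A. If [[a, x], x] = 0 for all x ∈ A, then [a, x] = 0 for all x ∈ A (where [u, v] = uv − vu denotes the commutator). -/
/-- In a semiprime complex algebra `A`, if `[[a, x], x] = 0` for all `x`, then `[a, x] = 0`
for all `x`. -/
theorem stmt14 {A : Type*}
    [NonUnitalRing A] [Module ℂ A] [SMulCommClass ℂ A A] [IsScalarTower ℂ A A]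
    (hsemiprime : ∀ a : A, (∀ x : A, a * x * a = 0) → a = 0)
    (a : A) (h : ∀ x : A, (a * x - x * a) * x - x * (a * x - x * a) = 0) :
    ∀ x : A, a * x - x * a = 0 := by
  -- Linearization of the hypothesis
  have lin : ∀ x y : A, ((a*x - x*a)*y - y*(a*x - x*a)) + ((a*y - y*a)*x - x*(a*y - y*a)) = 0 := by
    intro x y
    have e := h (x + y)
    have ex := h x
    have ey := h y
    have expand : ((a*x - x*a)*y - y*(a*x - x*a)) + ((a*y - y*a)*x - x*(a*y - y*a))
        = ((a*(x+y) - (x+y)*a)*(x+y) - (x+y)*(a*(x+y) - (x+y)*a))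
          - ((a*x - x*a)*x - x*(a*x - x*a)) - ((a*y - y*a)*y - y*(a*y - y*a)) := by
      noncomm_ring
    rw [expand, e, ex, ey]
    simp
  -- Key identity: (a*x - x*a) * [y, x] = 0
  have comm2 : ∀ x y : A, (a*x - x*a) * (y*x - x*y) = 0 := by
    intro x y
    have l1 := lin x (x*y)
    have l2 := lin x y
    have hx := h x
    have expand : (a*x - x*a) * (y*x - x*y)
        = (((a*x - x*a)*(x*y) - (x*y)*(a*x - x*a)) + ((a*(x*y) - (x*y)*a)*x - x*(a*(x*y) - (x*y)*a)))
          - x * (((a*x - x*a)*y - y*(a*x - x*a)) + ((a*y - y*a)*x - x*(a*y - y*a)))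
          - (((a*x - x*a)*x - x*(a*x - x*a)) * y + ((a*x - x*a)*x - x*(a*x - x*a)) * y) := by
      noncomm_ring
    rw [expand, l1, l2, hx]
    simp
  intro x
  apply hsemiprime
  intro y
  have c1 := comm2 x (y*a)
  have c2 := comm2 x y
  have expand : (a*x - x*a) * y * (a*x - x*a)
      = (a*x - x*a) * ((y*a)*x - x*(y*a)) - ((a*x - x*a) * (y*x - x*y)) * a := by
    noncomm_ring
  rw [expand, c1, c2]
  simp
end

section
/- Let A and B be (complex) algebras with B semiprime, and let φ : A → B be a surjective 3-homomorphism (a surjective linear map with φ(abc) = φ(a)φ(b)φ(c) for all a, b, c ∈ A). If A is commutative, then B is commutative. -/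
/-- If `B` is semiprime, `φ : A → B` is a surjective 3-homomorphism and `A` is commutative,
then `B` is commutative. -/
theorem stmt15 {A B : Type*}
    [NonUnitalRing A] [Module ℂ A] [SMulCommClass ℂ A A] [IsScalarTower ℂ A A]
    [NonUnitalRing B] [Module ℂ B] [SMulCommClass ℂ B B] [IsScalarTower ℂ B B]
    (hsemiprime : ∀ b : B, (∀ x : B, b * x * b = 0) → b = 0)
    (φ : A →ₗ[ℂ] B) (hsurj : Function.Surjective φ)
    (h3 : ∀ a b c : A, φ (a * b * c) = φ a * φ b * φ c)
    (hcomm : ∀ x y : A, x * y = y * x) :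
    ∀ x y : B, x * y = y * x := by
  intro x y
  obtain ⟨a, rfl⟩ := hsurj x
  obtain ⟨b, rfl⟩ := hsurj y
  have key : ∀ z : B, (φ a * φ b - φ b * φ a) * z = 0 := by
    intro z
    obtain ⟨c, rfl⟩ := hsurj z
    have : φ a * φ b * φ c = φ b * φ a * φ c := by
      rw [← h3, ← h3, hcomm a b]
    rw [sub_mul, this, sub_self]
  have := hsemiprime (φ a * φ b - φ b * φ a) (fun z => by
    rw [key, zero_mul])
  exact sub_eq_zero.mp this
end

section
/- Let A be a unital (complex) algebra with identity 1 and let φ : A → ℂ be a nonzero 3-homomorphism (a nonzero linear map with φ(abc) = φ(a)φ(b)φ(c) for all a, b, c ∈ A). Then φ(1) = 1 or φ(1) = −1, and the map a ↦ φ(1)·φ(a) is multiplicative; in other words, either φ or −φ is a character (a nonzero multiplicative linear functional) on A. -/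
/-- If `A` is a unital complex algebra and `φ : A → ℂ` is a nonzero 3-homomorphism, then
`φ 1 = 1` or `φ 1 = -1`, and `a ↦ φ 1 * φ a` is multiplicative (so either `φ` or `-φ` is a
character on `A`). -/
theorem stmt16 {A : Type*} [Ring A] [Algebra ℂ A]
    (φ : A →ₗ[ℂ] ℂ) (hne : φ ≠ 0)
    (h3 : ∀ a b c : A, φ (a * b * c) = φ a * φ b * φ c) :
    (φ 1 = 1 ∨ φ 1 = -1) ∧
    ∀ a b : A, φ 1 * φ (a * b) = (φ 1 * φ a) * (φ 1 * φ b) := by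
  have hsq : φ 1 * φ 1 = 1 := by
    by_contra h
    apply hne
    ext a
    have := h3 a 1 1
    simp only [mul_one] at this
    have : φ a * (φ 1 * φ 1 - 1) = 0 := by linear_combination -this
    rcases mul_eq_zero.mp this with h1 | h2
    · simpa using h1
    · exact absurd (by linear_combination h2) h
  constructor
  · have : (φ 1 - 1) * (φ 1 + 1) = 0 := by linear_combination hsq
    rcases mul_eq_zero.mp this with h | h
    · left; linear_combination h
    · right; linear_combination h
  · intro a b
    have := h3 a b 1
    rw [mul_one] at this
    linear_combination φ 1 * this
end

section
/- Let A be a unital complex Banach algebra and let φ : A → ℂ be a nonzero 3-homomorphism (a nonzero linear map with φ(abc) = φ(a)φ(b)φ(c) for all a, b, c ∈ A). Then φ is continuous. -/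
/-- Every nonzero 3-homomorphism from a unital complex Banach algebra to `ℂ` is continuous. -/
theorem stmt17 {A : Type*} [NormedRing A] [NormedAlgebra ℂ A] [CompleteSpace A]
    (φ : A →ₗ[ℂ] ℂ) (hne : φ ≠ 0)
    (h3 : ∀ a b c : A, φ (a * b * c) = φ a * φ b * φ c) :
    Continuous φ := by
  set c : ℂ := φ 1 with hc
  obtain ⟨a₀, ha₀⟩ : ∃ a, φ a ≠ 0 := by
    by_contra h
    push_neg at h
    exact hne (LinearMap.ext fun a => h a)
  have hc2 : c * c = 1 := by
    have := h3 a₀ 1 1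
    simp only [mul_one] at this
    have h' : φ a₀ * (c * c) = φ a₀ * 1 := by rw [mul_one, hc]; linear_combination this.symm
    exact mul_left_cancel₀ ha₀ h'
  have hcne : c ≠ 0 := fun h => by simp [h] at hc2
  -- ψ a = c * φ a is an algebra homomorphism
  have hmul : ∀ a b : A, φ (a * b) = c * (φ a * φ b) := by
    intro a b
    have := h3 a b 1
    rw [mul_one] at this
    rw [this]; ring
  let ψ : A →ₐ[ℂ] ℂ := AlgHom.mk'
    { toFun := fun a => c * φ a
      map_one' := by simpa using hc2
      map_mul' := fun a b => by
        show c * φ (a * b) = c * φ a * (c * φ b)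
        rw [hmul a b]; ring
      map_zero' := by simp
      map_add' := fun a b => by simp [mul_add] }
    (fun r a => by
      show c * φ (r • a) = r * (c * φ a)
      rw [map_smul, smul_eq_mul]; ring)
  have hcont : Continuous ψ := map_continuous ψ
  have : Continuous fun a => c⁻¹ * ψ a := hcont.const_smul c⁻¹
  have heq : ⇑φ = fun a => c⁻¹ * ψ a := by
    funext a
    show φ a = c⁻¹ * (c * φ a)
    field_simp
  rw [heq]; exact this
end
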